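/- Let π = N(0, ϑ I_d) be a centered Gaussian measure on ℝ^d with ϑ > 0, and let θ* ∈ ℝ^d with ‖θ*‖₂ ≤ 1. Then for every δ > 0: log π({θ: ‖θ−θ*‖₂ < δ}) ≥ d · log( (δ/(2√(2πϑd))) · exp( −1/ϑ − δ²/(ϑd) ) ). -/

import Mathlib

set_option autoImplicit false

open MeasureTheory ProbabilityTheory

/-- The Euclidean norm on `ℝ^d`. -/
noncomputable def eNorm {d : ℕ} (θ : Fin d → ℝ) : ℝ :=
  Real.sqrt (∑ i, θ i ^ 2)

/-! The cube `∏ᵢ (θ*ᵢ - r, θ*ᵢ + r)` with `r = δ / √d` lies inside the ball, and since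
`|θ*ᵢ| ≤ 1`, every point `x` of its `i`-th side satisfies `x² ≤ 2 + 2r²`. Hence the Gaussian
density is at least `exp (-(1 + r²) / ϑ) / √(2πϑ)` there, so each side has mass at least
`2r exp (-(1 + r²) / ϑ) / √(2πϑ)`, which is four times the number inside the logarithm;
the product measure of the cube is the `d`-th power of this. -/

open Real Set

lemma ofReal_mul_volume_le_gaussianReal (m : ℝ) {v : NNReal} (hv : v ≠ 0) {s : Set ℝ} {K : ℝ}
    (hs : ∀ x ∈ s, (x - m) ^ 2 ≤ K) :
    ENNReal.ofReal ((√(2 * π * v))⁻¹ * exp (-K / (2 * v))) * volume s ≤ gaussianReal m v s := by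
  rw [gaussianReal_apply m hv, ← setLIntegral_const]
  refine setLIntegral_mono (measurable_gaussianPDF m v) fun x hx ↦ ENNReal.ofReal_le_ofReal ?_
  rw [gaussianPDFReal]
  gcongr
  exact hs x hx

lemma abs_apply_le_eNorm {d : ℕ} (θ : Fin d → ℝ) (i : Fin d) : |θ i| ≤ eNorm θ :=
  Real.abs_le_sqrt <| Finset.single_le_sum (fun j _ ↦ sq_nonneg (θ j)) (Finset.mem_univ i)

lemma ofReal_le_gaussianReal_Ioo {v : NNReal} (hv : v ≠ 0) {a R r : ℝ} (ha : |a| ≤ R) :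
    ENNReal.ofReal (2 * r / √(2 * π * v) * exp (-(R ^ 2 + r ^ 2) / v))
      ≤ gaussianReal 0 v (Ioo (a - r) (a + r)) := by
  have hbound : ∀ x ∈ Ioo (a - r) (a + r), (x - 0) ^ 2 ≤ 2 * (R ^ 2 + r ^ 2) := by
    rintro x ⟨hxl, hxu⟩
    have ha2 : a ^ 2 ≤ R ^ 2 := sq_le_sq' (abs_le.mp ha).1 (abs_le.mp ha).2
    have hxa : (x - a) ^ 2 ≤ r ^ 2 := sq_le_sq' (by linarith) (by linarith)
    nlinarith [sq_nonneg (x - 2 * a)]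
  convert ofReal_mul_volume_le_gaussianReal 0 hv hbound using 1
  rw [Real.volume_Ioo, ← ENNReal.ofReal_mul (by positivity), neg_mul_eq_mul_neg,
    mul_div_mul_left _ _ two_ne_zero]
  congr 1
  ring

lemma pi_Ioo_subset_eNorm_sub_lt {d : ℕ} (hd : 0 < d) (c : Fin d → ℝ) {δ : ℝ} (hδ : 0 < δ) :
    univ.pi (fun i ↦ Ioo (c i - δ / √d) (c i + δ / √d)) ⊆ {θ | eNorm (θ - c) < δ} := by
  intro θ hθ
  have hd' : (0 : ℝ) < d := Nat.cast_pos.mpr hd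
  have hcoord : ∀ i, (θ - c) i ^ 2 < (δ / √d) ^ 2 := fun i ↦ by
    obtain ⟨hl, hu⟩ := hθ i (mem_univ i)
    exact sq_lt_sq' (by simp only [Pi.sub_apply]; linarith) (by simp only [Pi.sub_apply]; linarith)
  have : Nonempty (Fin d) := ⟨⟨0, hd⟩⟩
  rw [mem_ofPred_eq, eNorm, Real.sqrt_lt' hδ]
  calc ∑ i, (θ - c) i ^ 2 < ∑ _i : Fin d, (δ / √d) ^ 2 :=
        Finset.sum_lt_sum_of_nonempty Finset.univ_nonempty fun i _ ↦ hcoord i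
    _ = δ ^ 2 := by
        rw [Finset.sum_const, Finset.card_univ, Fintype.card_fin, nsmul_eq_mul, div_pow,
          sq_sqrt hd'.le]
        field_simp

lemma ofReal_pow_le_pi_gaussianReal_eNorm_sub_lt {d : ℕ} (hd : 0 < d) {v : NNReal} (hv : v ≠ 0)
    {c : Fin d → ℝ} {R : ℝ} (hc : eNorm c ≤ R) {δ : ℝ} (hδ : 0 < δ) :
    ENNReal.ofReal ((2 * (δ / √d) / √(2 * π * v) * exp (-(R ^ 2 + (δ / √d) ^ 2) / v)) ^ d)
      ≤ Measure.pi (fun _ : Fin d ↦ gaussianReal 0 v) {θ | eNorm (θ - c) < δ} := by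
  set r := δ / √d
  calc _ = ∏ i : Fin d,
        ENNReal.ofReal (2 * r / √(2 * π * v) * exp (-(R ^ 2 + r ^ 2) / v)) := by
        rw [ENNReal.ofReal_pow (by positivity), Finset.prod_const, Finset.card_univ,
          Fintype.card_fin]
    _ ≤ ∏ i : Fin d, gaussianReal 0 v (Ioo (c i - r) (c i + r)) :=
        Finset.prod_le_prod' fun i _ ↦
          ofReal_le_gaussianReal_Ioo hv ((abs_apply_le_eNorm c i).trans hc)
    _ = Measure.pi (fun _ : Fin d ↦ gaussianReal 0 v) (univ.pi fun i ↦ Ioo (c i - r) (c i + r)) :=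
        (Measure.pi_pi _ _).symm
    _ ≤ _ := measure_mono (pi_Ioo_subset_eNorm_sub_lt hd c hδ)

theorem statement16
    (d : ℕ) (hd : 0 < d)
    (ϑ : NNReal) (hϑ : 0 < ϑ)
    (θstar : Fin d → ℝ) (hθstar : eNorm θstar ≤ 1)
    (δ : ℝ) (hδ : 0 < δ) :
    (d : ℝ) * Real.log (δ / (2 * Real.sqrt (2 * Real.pi * (ϑ : ℝ) * d)) *
        Real.exp (-(1 / (ϑ : ℝ)) - δ ^ 2 / ((ϑ : ℝ) * d)))
      ≤ Real.log
          (((Measure.pi fun _ : Fin d => gaussianReal 0 ϑ)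
            {θ | eNorm (θ - θstar) < δ}).toReal) := by
  have hd' : (0 : ℝ) < d := Nat.cast_pos.mpr hd
  have hmeasure := ofReal_pow_le_pi_gaussianReal_eNorm_sub_lt hd hϑ.ne' hθstar hδ
  rw [ENNReal.ofReal_le_iff_le_toReal (measure_ne_top _ _)] at hmeasure
  set B := 2 * (δ / √d) / √(2 * π * ϑ) * exp (-(1 ^ 2 + (δ / √d) ^ 2) / ϑ) with hB_def
  have hA : δ / (2 * √(2 * π * ϑ * d)) * exp (-(1 / ϑ) - δ ^ 2 / (ϑ * d)) = B / 4 := by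
    rw [hB_def, sqrt_mul (by positivity), div_pow, sq_sqrt hd'.le]
    field_simp
    ring_nf
  have hB : 0 < B := by positivity
  rw [hA, ← Real.log_pow]
  exact Real.log_le_log (by positivity)
    ((pow_le_pow_left₀ (by positivity) (div_le_self hB.le (by norm_num)) d).trans hmeasure)
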